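/- arXiv:0909.3351 — 4 statements merged into one kernel-verified Lean document; each statement's English description precedes it below -/
import Mathlib

section
/- If R is a commutative Noetherian ring with identity of Krull dimension d, then sdim(R) ≤ d; that is, R satisfies the stable range condition (R_{d+1}): for every unimodular row (a₁,…,a_{d+2}) ∈ Um_{d+2}(R) there exist x₁,…,x_{d+1} ∈ R such that (a₁+a_{d+2}x₁)R + ⋯ + (a_{d+1}+a_{d+2}x_{d+1})R = R. -/
/-
Write `b` for the last entry of the row and `c₁, …, c_{d+1}` for the others. Bass chooses the
`xᵢ` one at a time so that every prime containing `c₁ + b x₁, …, c_k + b x_k` but not `b` has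
height at least `k`. Given the first `k`, coset prime avoidance, applied to the finitely many
minimal primes of the ideal they generate that do not contain `b`, gives `x_{k+1}` with
`c_{k+1} + b x_{k+1}` outside all of them; a prime containing it then lies strictly above one of
them. For `k = d + 1` the height bound `d` leaves no such prime, so a maximal ideal containing
every `cᵢ + b xᵢ` contains `b`, hence the whole unimodular row.
-/

/-- A row `a` over a (possibly noncommutative) ring `R` is unimodular if
`a₁R + ⋯ + aₙR = R`, i.e. there are `bᵢ` with `∑ aᵢ bᵢ = 1`. -/
def IsUnimodularRow {R : Type*} [Ring R] {n : ℕ} (a : Fin n → R) : Prop :=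
  ∃ b : Fin n → R, ∑ i, a i * b i = 1

/-- Bass's stable range condition `(R_m)`: for every unimodular row
`(a₁, …, a_{m+1})` there exist `x₁, …, x_m` with
`(a₁ + a_{m+1}x₁)R + ⋯ + (a_m + a_{m+1}x_m)R = R`. -/
def SatisfiesStableRange (R : Type*) [Ring R] (m : ℕ) : Prop :=
  ∀ a : Fin (m + 1) → R, IsUnimodularRow a →
    ∃ x : Fin m → R,
      IsUnimodularRow (fun i : Fin m => a i.castSucc + a (Fin.last m) * x i)

theorem isUnimodularRow_iff_span_range_eq_top {R : Type*} [CommRing R] {n : ℕ}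
    (a : Fin n → R) : IsUnimodularRow a ↔ Ideal.span (Set.range a) = ⊤ := by
  simp only [Ideal.eq_top_iff_one, Ideal.span, Submodule.mem_span_range_iff_exists_fun,
    IsUnimodularRow, smul_eq_mul, mul_comm]

theorem IsUnimodularRow.last_notMem {R : Type*} [CommRing R] {m : ℕ} {a : Fin (m + 1) → R}
    (ha : IsUnimodularRow a) {P : Ideal R} (hP : P ≠ ⊤) (x : Fin m → R)
    (hx : ∀ i, a i.castSucc + a (Fin.last m) * x i ∈ P) : a (Fin.last m) ∉ P := by
  intro hb
  refine hP (top_le_iff.mp ?_)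
  rw [← (isUnimodularRow_iff_span_range_eq_top a).mp ha, Ideal.span_le, Set.range_subset_iff]
  intro j
  induction j using Fin.lastCases with
  | last => exact hb
  | cast i => exact (P.add_mem_iff_left (P.mul_mem_right _ hb)).mp (hx i)

theorem Ideal.exists_add_mul_notMem_of_isAntichain {R : Type*} [CommRing R]
    {S : Finset (Ideal R)} (hprime : ∀ P ∈ S, P.IsPrime)
    (hS : IsAntichain (· ≤ ·) (S : Set (Ideal R)))
    {b : R} (hb : ∀ P ∈ S, b ∉ P) (a : R) : ∃ t, ∀ P ∈ S, a + b * t ∉ P := by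
  classical
  have separating : ∀ P ∈ S, ∃ s ∉ P, ∀ Q ∈ S, Q ≠ P → s ∈ Q := by
    intro P hP
    have : ¬(S.erase P).inf id ≤ P := by
      rw [(hprime P hP).inf_le']
      rintro ⟨Q, hQ, hQP⟩
      exact hS (Finset.mem_of_mem_erase hQ) hP (Finset.ne_of_mem_erase hQ) hQP
    obtain ⟨s, hs, hsP⟩ := SetLike.not_le_iff_exists.mp this
    exact ⟨s, hsP, fun Q hQ hQP => Finset.inf_le (f := id) (Finset.mem_erase.2 ⟨hQP, hQ⟩) hs⟩
  choose! s hsP hsQ using separating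
  -- Modulo `P ∈ S`, `a + b * t` is `b * s P` if `a ∈ P` and `a` otherwise.
  refine ⟨∑ Q ∈ S with a ∈ Q, s Q, fun P hP => ?_⟩
  by_cases haP : a ∈ P
  · have hrest : ∑ Q ∈ (S.filter (a ∈ ·)).erase P, s Q ∈ P := P.sum_mem fun Q hQ =>
      hsQ Q (Finset.mem_filter.1 (Finset.mem_of_mem_erase hQ)).1 P hP
        (Finset.ne_of_mem_erase hQ).symm
    rw [← Finset.add_sum_erase _ _ (Finset.mem_filter.2 ⟨hP, haP⟩), mul_add, ← add_assoc,
      P.add_mem_iff_left (P.mul_mem_left b hrest), P.add_mem_iff_right haP]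
    exact fun hbs => (hprime P hP).mem_or_mem hbs |>.elim (hb P hP) (hsP P hP)
  · have ht : ∑ Q ∈ S with a ∈ Q, s Q ∈ P := P.sum_mem fun Q hQ =>
      hsQ Q (Finset.mem_filter.1 hQ).1 P hP fun hQP => haP (hQP ▸ (Finset.mem_filter.1 hQ).2)
    rwa [P.add_mem_iff_left (P.mul_mem_left b ht)]

theorem Ideal.exists_add_mul_forall_height_succ_le {R : Type*} [CommRing R] [IsNoetherianRing R]
    {I : Ideal R} {b : R} {k : ℕ∞} (hI : ∀ P : Ideal R, P.IsPrime → I ≤ P → b ∉ P → k ≤ P.height)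
    (c : R) : ∃ t, ∀ P : Ideal R, P.IsPrime → I ≤ P → c + b * t ∈ P → b ∉ P →
      k + 1 ≤ P.height := by
  have hfin : {Q ∈ I.minimalPrimes | b ∉ Q}.Finite :=
    (Ideal.finite_minimalPrimes_of_isNoetherianRing R I).subset fun Q hQ => hQ.1
  obtain ⟨t, ht⟩ := exists_add_mul_notMem_of_isAntichain (S := hfin.toFinset)
    (fun Q hQ => (hfin.mem_toFinset.mp hQ).1.1.1)
    ((setOfPred_minimal_antichain _).subset fun Q hQ => (hfin.mem_toFinset.mp hQ).1)
    (fun Q hQ => (hfin.mem_toFinset.mp hQ).2) c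
  refine ⟨t, fun P hP hIP hcP hbP => ?_⟩
  obtain ⟨Q, hQ, hQP⟩ := Ideal.exists_minimalPrimes_le hIP
  have hbQ : b ∉ Q := fun h => hbP (hQP h)
  have hcQ : c + b * t ∉ Q := ht Q (hfin.mem_toFinset.mpr ⟨hQ, hbQ⟩)
  have : Q.IsPrime := hQ.1.1
  calc k + 1 ≤ Q.height + 1 := by gcongr; exact hI Q hQ.1.1 hQ.1.2 hbQ
    _ ≤ P.height := Ideal.height_add_one_le_of_lt_of_isPrime
        (lt_of_le_of_ne hQP fun hQeq => hcQ (hQeq ▸ hcP))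

theorem exists_forall_add_mul_mem_le_height {R : Type*} [CommRing R] [IsNoetherianRing R]
    (b : R) {n : ℕ} (c : Fin n → R) : ∃ x : Fin n → R, ∀ P : Ideal R, P.IsPrime →
      (∀ i, c i + b * x i ∈ P) → b ∉ P → n ≤ P.height := by
  induction n with
  | zero => exact ⟨0, fun P _ _ _ => by simp⟩
  | succ n ih =>
    obtain ⟨x, hx⟩ := ih (Fin.tail c)
    obtain ⟨t, ht⟩ := Ideal.exists_add_mul_forall_height_succ_le (I := Ideal.span
      (Set.range fun i => Fin.tail c i + b * x i)) (fun P hP hIP => hx P hP fun i =>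
        hIP (Ideal.subset_span ⟨i, rfl⟩)) (c 0)
    refine ⟨Fin.cons t x, fun P hP hcP hbP => ?_⟩
    rw [Fin.forall_fin_succ] at hcP
    have := ht P hP (Ideal.span_le.mpr (Set.range_subset_iff.mpr hcP.2)) hcP.1 hbP
    exact_mod_cast this

/-- **Bass.** A commutative Noetherian ring of Krull dimension `d` has stable
dimension at most `d`, i.e. it satisfies the stable range condition `(R_{d+1})`. -/
theorem stableRange_of_noetherian_of_krullDim_le
    (R : Type*) [CommRing R] [IsNoetherianRing R] (d : ℕ)
    (hdim : ringKrullDim R = d) :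
    SatisfiesStableRange R (d + 1) := by
  intro a ha
  obtain ⟨x, hx⟩ := exists_forall_add_mul_mem_le_height (a (Fin.last (d + 1))) (a ·.castSucc)
  refine ⟨x, (isUnimodularRow_iff_span_range_eq_top _).mpr ?_⟩
  by_contra hne
  obtain ⟨M, hM, hle⟩ := Ideal.exists_le_maximal _ hne
  have hmem : ∀ i, a i.castSucc + a (Fin.last (d + 1)) * x i ∈ M :=
    fun i => hle (Ideal.subset_span ⟨i, rfl⟩)
  have hheight := hx M hM.isPrime hmem (ha.last_notMem hM.ne_top x hmem)
  have hdim_le := hdim ▸ Ideal.height_le_ringKrullDim_of_ne_top hM.ne_top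
  have := (WithBot.coe_le_coe.mpr hheight).trans hdim_le
  norm_cast at this
  omega
end

section
/- Let R be a commutative ring with identity and let (P, ⟨·,·⟩) be a symplectic R-module. If P contains a unimodular element, then (P, ⟨·,·⟩) contains a hyperbolic plane as an orthogonal direct summand: there exist elements p, f ∈ P with ⟨p,f⟩ = 1 and a submodule Q = {q ∈ P : ⟨q,p⟩ = 0 and ⟨q,f⟩ = 0} such that P ≅ Q ⊕ (Rp ⊕ Rf), and Rp ⊕ Rf with the restricted form is isometric to the hyperbolic plane ℍ(R). -/
/-- An element `q` of an `R`-module `M` is unimodular if `Rq ≅ R` and `Rq` is a direct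
summand of `M`; equivalently there is a functional `φ : M → R` with `φ q = 1`. -/
def IsUnimodular (R : Type*) [Ring R] {M : Type*} [AddCommGroup M] [Module R M]
    (q : M) : Prop :=
  ∃ φ : M →ₗ[R] R, φ q = 1

/-- If `(P, B)` is a symplectic module over a commutative ring `R` (a finitely
generated projective module with a nondegenerate alternating form) containing a
unimodular element, then `P` contains a hyperbolic plane as an orthogonal direct
summand: there are `p, f ∈ P` with `B p f = 1`, the elements `p, f` are linearly
independent, `P = Q ⊕ (Rp ⊕ Rf)` where `Q = {q | B q p = 0 ∧ B q f = 0}`, and the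
form restricted to `Rp ⊕ Rf` is the hyperbolic form `⟨(a,b),(c,d)⟩ = ad - bc`. -/
theorem hyperbolic_summand_of_unimodular
    (R : Type*) [CommRing R] (P : Type*) [AddCommGroup P] [Module R P]
    [Module.Finite R P] [Module.Projective R P]
    (B : LinearMap.BilinForm R P)
    (halt : ∀ p : P, B p p = 0)
    (hnd : Function.Bijective fun p : P => B p)
    (hum : ∃ q : P, IsUnimodular R q) :
    ∃ p f : P, B p f = 1 ∧
      LinearIndependent R ![p, f] ∧
      IsCompl (LinearMap.ker (B.flip p) ⊓ LinearMap.ker (B.flip f))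
        (Submodule.span R {p, f}) ∧
      (∀ a b c d : R, B (a • p + b • f) (c • p + d • f) = a * d - b * c) := by
  obtain ⟨q, φ, hφ⟩ := hum
  obtain ⟨p, hp⟩ := hnd.2 φ
  have hskew : ∀ x y : P, B x y = - B y x := by
    intro x y
    have h := halt (x + y)
    simp only [map_add, LinearMap.add_apply, halt, zero_add, add_zero] at h
    linear_combination h
  have hBpq : B p q = 1 := by
    have := LinearMap.congr_fun hp q
    simpa [hφ] using this
  have hBqp : B q p = -1 := by rw [hskew, hBpq]
  have hker : ∀ y x : P, x ∈ LinearMap.ker (B.flip y) ↔ B x y = 0 := by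
    intro y x
    simp [LinearMap.mem_ker, LinearMap.flip_apply]
  refine ⟨p, q, hBpq, ?_, ?_, ?_⟩
  · rw [LinearIndependent.pair_iff]
    intro s t hst
    have h1 : B (s • p + t • q) q = 0 := by rw [hst]; simp
    have h2 : B (s • p + t • q) p = 0 := by rw [hst]; simp
    simp only [map_add, map_smul, LinearMap.add_apply, LinearMap.smul_apply,
      smul_eq_mul, hBpq, hBqp, halt] at h1 h2
    constructor
    · linear_combination h1
    · linear_combination -h2
  · constructor
    · rw [Submodule.disjoint_def]
      intro x hx hx2
      obtain ⟨hx1, hx1'⟩ := Submodule.mem_inf.mp hx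
      rw [hker] at hx1 hx1'
      obtain ⟨c, d, hcd⟩ := Submodule.mem_span_pair.mp hx2
      have h1 : B (c • p + d • q) q = 0 := by rw [hcd]; exact hx1'
      have h2 : B (c • p + d • q) p = 0 := by rw [hcd]; exact hx1
      simp only [map_add, map_smul, LinearMap.add_apply, LinearMap.smul_apply,
        smul_eq_mul, hBpq, hBqp, halt] at h1 h2
      have hc : c = 0 := by linear_combination h1
      have hd : d = 0 := by linear_combination -h2
      rw [← hcd, hc, hd]
      simp
    · rw [codisjoint_iff_le_sup]
      intro x _
      rw [Submodule.mem_sup]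
      refine ⟨x - (B x q) • p + (B x p) • q, ?_, (B x q) • p - (B x p) • q, ?_, by abel⟩
      · rw [Submodule.mem_inf, hker, hker]
        constructor <;>
          simp only [map_add, map_sub, map_smul, LinearMap.add_apply, LinearMap.sub_apply,
            LinearMap.smul_apply, smul_eq_mul, hBpq, hBqp, halt] <;> ring
      · have hp' : p ∈ Submodule.span R {p, q} :=
          Submodule.subset_span (Set.mem_insert _ _)
        have hq' : q ∈ Submodule.span R {p, q} :=
          Submodule.subset_span (Set.mem_insert_of_mem _ rfl)
        exact Submodule.sub_mem _ (Submodule.smul_mem _ _ hp') (Submodule.smul_mem _ _ hq')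
  · intro a b c d
    simp only [map_add, map_smul, LinearMap.add_apply, LinearMap.smul_apply,
      smul_eq_mul, hBpq, hBqp, halt]
    ring
end

section
/- Let A be a commutative ring with identity, S ⊆ A a multiplicatively closed subset, and r ≥ 3. If GL_r(A[X]) = GL_r(A)·E_r(A[X]), then GL_r(S⁻¹A[X]) = GL_r(S⁻¹A)·E_r(S⁻¹A[X]). -/
/-- The elementary matrix `e_{ij}(a) = 1 + a·E_{ij}`. -/
def elemMat {R : Type*} [Ring R] {n : ℕ} (i j : Fin n) (a : R) :
    Matrix (Fin n) (Fin n) R :=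
  1 + Matrix.single i j a

/-- The elementary subgroup `Eₙ(R)` of `GLₙ(R)`. -/
def elementaryGroup (n : ℕ) (R : Type*) [Ring R] :
    Subgroup (Matrix (Fin n) (Fin n) R)ˣ :=
  Subgroup.closure {g | ∃ i j a, i ≠ j ∧ g.val = elemMat i j a}

/-!
Write `M = M(0) · M'` with `M'(0) = 1`. A substitution `X ↦ sX` with `s ∈ S` clears the
denominators of `M'` and `M'⁻¹` without touching their constant terms, so both lift to matrices
`P, Q` over `A[X]` with `P(0) = Q(0) = 1`. The defect `PQ - 1` vanishes in `S⁻¹A[X]` and has zero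
constant term, so a further substitution `X ↦ tX` with `t ∈ S` kills it. The resulting element of
`GL_r(A[X])` decomposes by hypothesis; mapping the decomposition to `S⁻¹A[X]` and substituting
`X ↦ X / (st)` decomposes `M'`.
-/

open Polynomial Matrix

namespace Polynomial

variable {R R' : Type*} [CommRing R] [CommRing R']

noncomputable def scaleX (c : R) : R[X] →+* R[X] := compRingHom (C c * X)

@[simp] lemma scaleX_apply (c : R) (p : R[X]) : scaleX c p = p.comp (C c * X) := rfl

lemma coeff_scaleX (c : R) (p : R[X]) (n : ℕ) : (scaleX c p).coeff n = p.coeff n * c ^ n :=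
  comp_C_mul_X_coeff

lemma scaleX_comp_scaleX (c d : R) : (scaleX c).comp (scaleX d) = scaleX (d * c) := by
  ext <;> simp [mul_assoc]

lemma scaleX_one : scaleX (1 : R) = RingHom.id R[X] := by
  ext <;> simp

lemma mapRingHom_comp_scaleX (f : R →+* R') (c : R) :
    (mapRingHom f).comp (scaleX c) = (scaleX (f c)).comp (mapRingHom f) := by
  ext <;> simp

end Polynomial

section Elementary

variable {R R' : Type*} [CommRing R] [CommRing R'] {n : ℕ}

lemma map_elemMat (f : R →+* R') (i j : Fin n) (a : R) :
    (elemMat i j a).map f = elemMat i j (f a) := by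
  simp [elemMat, Matrix.map_add, Matrix.map_one, Matrix.map_single]

lemma Matrix.GeneralLinearGroup.map_mem_elementaryGroup (f : R →+* R') {g : GL (Fin n) R}
    (hg : g ∈ elementaryGroup n R) : GeneralLinearGroup.map f g ∈ elementaryGroup n R' := by
  refine (Subgroup.map_le_iff_le_comap.2 ?_) (Subgroup.mem_map_of_mem _ hg)
  rw [elementaryGroup, Subgroup.closure_le]
  rintro g ⟨i, j, a, hij, hg⟩
  exact Subgroup.subset_closure ⟨i, j, f a, hij, by simp [hg, map_elemMat]⟩

end Elementary

theorem Submonoid.exists_mem_forall_of_finite {M ι : Type*} [CommMonoid M] [Finite ι]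
    (S : Submonoid M) (p : ι → M → Prop) (hp : ∀ i a b, p i a → p i (a * b))
    (h : ∀ i, ∃ s ∈ S, p i s) : ∃ s ∈ S, ∀ i, p i s := by
  classical
  have := Fintype.ofFinite ι
  choose s hsS hs using h
  refine ⟨∏ i, s i, S.prod_mem fun i _ => hsS i, fun i => ?_⟩
  rw [← Finset.mul_prod_erase _ s (Finset.mem_univ i)]
  exact hp _ _ _ (hs i)

section Lifts

variable {A L : Type*} [CommRing A] [CommRing L]

namespace Polynomial

lemma scaleX_mem_lifts (f : A →+* L) {p : L[X]} {s : A} (h0 : p.coeff 0 ∈ Set.range f)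
    (h : C (f s) * p ∈ lifts f) : scaleX (f s) p ∈ lifts f := by
  rw [lifts_iff_coeff_lifts] at h ⊢
  rintro (_ | n)
  · simpa [coeff_scaleX] using h0
  · obtain ⟨b, hb⟩ := h (n + 1)
    refine ⟨b * s ^ n, ?_⟩
    rw [coeff_C_mul] at hb
    rw [coeff_scaleX, map_mul, hb, map_pow, pow_succ]
    ring

lemma exists_lift_coeff_zero_eq (f : A →+* L) {p : L[X]} (hp : p ∈ lifts f) {a : A}
    (ha : p.coeff 0 = f a) : ∃ q : A[X], q.map f = p ∧ q.coeff 0 = a := by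
  obtain ⟨q, rfl⟩ := (mem_lifts p).1 hp
  rw [coeff_map] at ha
  exact ⟨q + C (a - q.coeff 0), by simp [ha], by simp⟩

lemma scaleX_eq_zero {D : A[X]} {t : A} (h0 : D.coeff 0 = 0) (h : C t * D = 0) :
    scaleX t D = 0 := by
  ext (_ | n)
  · simp [h0]
  · have htD : t * D.coeff (n + 1) = 0 := by simpa using congrArg (coeff · (n + 1)) h
    rw [coeff_scaleX, pow_succ, ← mul_assoc, mul_comm _ t, ← mul_assoc, htD]
    simp

end Polynomial

variable (S : Submonoid A) [Algebra A L] [IsLocalization S L]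

attribute [local instance] Polynomial.algebra Polynomial.isLocalization in
lemma IsLocalization.exists_forall_C_mul_mem_lifts {ι : Type*} [Finite ι] (p : ι → L[X]) :
    ∃ s ∈ S, ∀ i, C (algebraMap A L s) * p i ∈ lifts (algebraMap A L) := by
  obtain ⟨⟨_, s, hs, rfl⟩, h⟩ := IsLocalization.exist_integer_multiples_of_finite (S.map C) p
  refine ⟨s, hs, fun i => ?_⟩
  obtain ⟨q, hq⟩ := h i
  refine ⟨q, ?_⟩
  simpa [Algebra.smul_def] using hq

attribute [local instance] Polynomial.algebra Polynomial.isLocalization in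
lemma IsLocalization.exists_forall_C_mul_eq_zero {ι : Type*} [Finite ι] (D : ι → A[X])
    (hD : ∀ i, (D i).map (algebraMap A L) = 0) : ∃ t ∈ S, ∀ i, C t * D i = 0 := by
  refine S.exists_mem_forall_of_finite _ (fun i a b h => ?_) fun i => ?_
  · rw [C_mul, mul_comm (C a), mul_assoc, h, mul_zero]
  · obtain ⟨⟨_, t, ht, rfl⟩, h⟩ := (IsLocalization.map_eq_zero_iff (S.map C) L[X] (D i)).1 (hD i)
    exact ⟨t, ht, h⟩

end Lifts

section Matrices

variable {A L : Type*} [CommRing A] [CommRing L] {n : Type*}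

lemma Matrix.exists_lift_map_scaleX [DecidableEq n] (f : A →+* L) (P : Matrix n n L[X]) {s : A}
    (hP0 : P.map constantCoeff = 1) (hP : ∀ i j, C (f s) * P i j ∈ lifts f) :
    ∃ Q : Matrix n n A[X],
      Q.map (mapRingHom f) = P.map (scaleX (f s)) ∧ Q.map constantCoeff = 1 := by
  have hlift : ∀ i j, ∃ q : A[X], q.map f = scaleX (f s) (P i j) ∧
      q.coeff 0 = (1 : Matrix n n A) i j := by
    intro i j
    have hPij : (P i j).coeff 0 = f ((1 : Matrix n n A) i j) := by
      have hP0ij : (P i j).coeff 0 = (1 : Matrix n n L) i j := congr_fun₂ hP0 i j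
      rw [hP0ij, Matrix.one_apply, Matrix.one_apply]
      split_ifs <;> simp
    refine exists_lift_coeff_zero_eq f (scaleX_mem_lifts f ⟨_, hPij.symm⟩ (hP i j)) ?_
    simpa [coeff_scaleX] using hPij
  choose Q hQ hQ0 using hlift
  exact ⟨Matrix.of Q, by ext1 i j; exact hQ i j, by ext1 i j; exact hQ0 i j⟩

variable (S : Submonoid A) [Algebra A L] [IsLocalization S L]

lemma IsLocalization.exists_map_scaleX_eq_zero [Fintype n] (D : Matrix n n A[X])
    (hD : D.map (mapRingHom (algebraMap A L)) = 0) (hD0 : D.map constantCoeff = 0) :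
    ∃ t ∈ S, D.map (scaleX t) = 0 := by
  obtain ⟨t, ht, htD⟩ := exists_forall_C_mul_eq_zero S (fun ij : n × n => D ij.1 ij.2)
    fun ij => congr_fun₂ hD ij.1 ij.2
  exact ⟨t, ht, Matrix.ext fun i j => scaleX_eq_zero (congr_fun₂ hD0 i j) (htD (i, j))⟩

end Matrices

namespace Matrix.GeneralLinearGroup

variable {A L : Type*} [CommRing A] [CommRing L] {n : Type*} [Fintype n] [DecidableEq n]

lemma exists_map_constantCoeff_eq_one (M : GL n L[X]) :
    ∃ M' : GL n L[X], map constantCoeff M' = 1 ∧ M = map C (map constantCoeff M) * M' := by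
  have hC : constantCoeff.comp (C : L →+* L[X]) = RingHom.id L :=
    RingHom.ext fun _ => coeff_C_zero
  refine ⟨(map C (map constantCoeff M))⁻¹ * M, ?_, (mul_inv_cancel_left _ _).symm⟩
  rw [map_mul, map_inv, ← map_comp_apply, ← map_comp, hC, map_id, MonoidHom.id_apply,
    inv_mul_cancel]

variable (S : Submonoid A) [Algebra A L] [IsLocalization S L]

theorem exists_map_eq_map_scaleX (M : GL n L[X]) (hM : map constantCoeff M = 1) :
    ∃ s ∈ S, ∃ P : GL n A[X],
      map (mapRingHom (algebraMap A L)) P = map (scaleX (algebraMap A L s)) M := by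
  have hM0 : M.val.map constantCoeff = 1 := congrArg Units.val hM
  have hMinv0 : (M⁻¹).val.map constantCoeff = 1 :=
    congrArg Units.val (show map constantCoeff M⁻¹ = 1 by rw [map_inv, hM, inv_one])
  obtain ⟨s, hs, hlifts⟩ := IsLocalization.exists_forall_C_mul_mem_lifts S
    (fun x : Fin 2 × n × n => ![M.val, (M⁻¹).val] x.1 x.2.1 x.2.2)
  obtain ⟨Q, hQ, hQ0⟩ := Matrix.exists_lift_map_scaleX _ M.val hM0 fun i j => hlifts (0, i, j)
  obtain ⟨Q', hQ', hQ'0⟩ :=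
    Matrix.exists_lift_map_scaleX _ (M⁻¹).val hMinv0 fun i j => hlifts (1, i, j)
  simp only [← RingHom.mapMatrix_apply] at hQ hQ' hQ0 hQ'0
  obtain ⟨t, ht, hD⟩ := IsLocalization.exists_map_scaleX_eq_zero S (L := L) (Q * Q' - 1)
    (by rw [← RingHom.mapMatrix_apply, map_sub, map_mul, hQ, hQ', ← map_mul, M.mul_inv, map_one,
      map_one, sub_self])
    (by rw [← RingHom.mapMatrix_apply, map_sub, map_mul, hQ0, hQ'0, mul_one, map_one, sub_self])
  rw [← RingHom.mapMatrix_apply, map_sub, map_mul, map_one, sub_eq_zero] at hD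
  refine ⟨s * t, S.mul_mem hs ht, ⟨_, _, hD, mul_eq_one_comm.1 hD⟩, Units.ext ?_⟩
  change (mapRingHom _).mapMatrix ((scaleX t).mapMatrix Q) = (scaleX _).mapMatrix M.val
  rw [← RingHom.comp_apply, RingHom.mapMatrix_comp, mapRingHom_comp_scaleX,
    ← RingHom.mapMatrix_comp, RingHom.comp_apply, hQ, ← RingHom.comp_apply,
    RingHom.mapMatrix_comp, scaleX_comp_scaleX, map_mul]

end Matrix.GeneralLinearGroup

theorem localization_of_GL_eq_GL_mul_elementary_general
    (A : Type*) [CommRing A] (S : Submonoid A) (r : ℕ)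
    (H : ∀ M : (Matrix (Fin r) (Fin r) (Polynomial A))ˣ,
      ∃ N : (Matrix (Fin r) (Fin r) A)ˣ,
        ∃ E ∈ elementaryGroup r (Polynomial A),
          M = Units.map ((Polynomial.C : A →+* Polynomial A).mapMatrix).toMonoidHom N * E) :
    ∀ M : (Matrix (Fin r) (Fin r) (Polynomial (Localization S)))ˣ,
      ∃ N : (Matrix (Fin r) (Fin r) (Localization S))ˣ,
        ∃ E ∈ elementaryGroup r (Polynomial (Localization S)),
          M = Units.map ((Polynomial.C : Localization S →+* Polynomial (Localization S)).mapMatrix).toMonoidHom N * E := by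
  intro M
  obtain ⟨M', hM'0, hM⟩ := GeneralLinearGroup.exists_map_constantCoeff_eq_one M
  obtain ⟨s, hs, P, hP⟩ := GeneralLinearGroup.exists_map_eq_map_scaleX S M' hM'0
  obtain ⟨N, E, hE, hPNE⟩ := H P
  change P = GeneralLinearGroup.map C N * E at hPNE
  set φ := algebraMap A (Localization S)
  set ψ := (scaleX (IsLocalization.mk' (Localization S) 1 ⟨s, hs⟩)).comp (mapRingHom φ)
  have hψC : ψ.comp C = C.comp φ := by ext; simp [ψ]
  have hsu : φ s * IsLocalization.mk' (Localization S) 1 ⟨s, hs⟩ = 1 := by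
    rw [IsLocalization.mk'_spec' (Localization S) (1 : A) ⟨s, hs⟩, map_one]
  have hM' : M' = GeneralLinearGroup.map ψ P := by
    rw [GeneralLinearGroup.map_comp, MonoidHom.comp_apply, hP,
      ← GeneralLinearGroup.map_comp_apply, ← GeneralLinearGroup.map_comp, scaleX_comp_scaleX,
      hsu, scaleX_one, GeneralLinearGroup.map_id, MonoidHom.id_apply]
  refine ⟨GeneralLinearGroup.map constantCoeff M * GeneralLinearGroup.map φ N,
    GeneralLinearGroup.map ψ E, GeneralLinearGroup.map_mem_elementaryGroup ψ hE, ?_⟩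
  change M = GeneralLinearGroup.map C _ * _
  conv_lhs => rw [hM, hM', hPNE]
  simp only [map_mul, ← GeneralLinearGroup.map_comp_apply, ← GeneralLinearGroup.map_comp, hψC,
    mul_assoc]

/-- **Vorst.** If `GL_r(A[X]) = GL_r(A)·E_r(A[X])` then the same decomposition holds
after localization: `GL_r(S⁻¹A[X]) = GL_r(S⁻¹A)·E_r(S⁻¹A[X])`. -/
theorem localization_of_GL_eq_GL_mul_elementary
    (A : Type*) [CommRing A] (S : Submonoid A) (r : ℕ) (hr : 3 ≤ r)
    (H : ∀ M : (Matrix (Fin r) (Fin r) (Polynomial A))ˣ,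
      ∃ N : (Matrix (Fin r) (Fin r) A)ˣ,
        ∃ E ∈ elementaryGroup r (Polynomial A),
          M = Units.map ((Polynomial.C : A →+* Polynomial A).mapMatrix).toMonoidHom N * E) :
    ∀ M : (Matrix (Fin r) (Fin r) (Polynomial (Localization S)))ˣ,
      ∃ N : (Matrix (Fin r) (Fin r) (Localization S))ˣ,
        ∃ E ∈ elementaryGroup r (Polynomial (Localization S)),
          M = Units.map ((Polynomial.C : Localization S →+* Polynomial (Localization S)).mapMatrix).toMonoidHom N * E :=
  localization_of_GL_eq_GL_mul_elementary_general A S r H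
end

section
/- Let A be a commutative ring with identity, B ⊆ A a subring, and h ∈ B a non-nilpotent element such that Ah + B = A. Then for every r ≥ 3, every α ∈ E_r(A_h) can be written as α = γ_h·β, where γ ∈ E_r(A), γ_h is its image in E_r(A_h), and β ∈ E_r(B_h). -/
/-- The natural ring homomorphism `B_h → A_h` for a subring `B ⊆ A` and `h ∈ B`. -/
noncomputable def locSubringMap (A : Type*) [CommRing A] (B : Subring A) (h : A)
    (hB : h ∈ B) :
    Localization.Away (⟨h, hB⟩ : B) →+* Localization.Away h :=
  Localization.awayLift ((algebraMap A (Localization.Away h)).comp B.subtype)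
    (⟨h, hB⟩ : B)
    (by
      simpa using
        IsLocalization.map_units (M := Submonoid.powers h) (Localization.Away h)
          ⟨h, Submonoid.mem_powers h⟩)

/-!
Write `H` and `K` for the images of `E_r(A)` and `E_r(B_h)` in `GL_r(A_h)`. Since `Ah + B = A`
gives `A_h = A + B_h`, every generator of `E_r(A_h)` is a product of one from `H` and one from
`K`, so it suffices to show `K H ⊆ H K`, i.e. that every `k ∈ K` conjugates every `e_ij(a)`,
`a ∈ A`, into `H K`.

The input for this is a conjugation lemma in the style of Suslin and Vorst: for `β ∈ E_r(A_h)`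
and any `L`, conjugation by `β` maps the subgroup generated by the `e_ij(h^N a)` into the one
generated by the `e_ij(h^L a)` once `N` is large. For a single generator `e_kl(w)` this follows
from the commutator relations, the denominator of `w` costing a bounded power of `h`; the
transposed case `(k, l) = (j, i)` needs a third index, whence `r ≥ 3`. Now write
`a = h^N c + b` with `b ∈ B`: then `k e_ij(a) k⁻¹ = (k e_ij(h^N c) k⁻¹) (k e_ij(b) k⁻¹)` with
the first factor in `H` and the second in `K`.
-/

open Matrix
open scoped commutatorElement Pointwise

section Elementary

variable {R : Type*} [Ring R] {n : ℕ}

lemma elemMat_mul_elemMat_same {i j : Fin n} (hij : i ≠ j) (a b : R) :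
    elemMat i j a * elemMat i j b = elemMat i j (a + b) := by
  simp [elemMat, mul_add, add_mul, hij.symm, single_add]
  abel

def elemUnit (i j : Fin n) (hij : i ≠ j) (a : R) : GL (Fin n) R where
  val := elemMat i j a
  inv := elemMat i j (-a)
  val_inv := by rw [elemMat_mul_elemMat_same hij]; simp [elemMat]
  inv_val := by rw [elemMat_mul_elemMat_same hij]; simp [elemMat]

lemma elemUnit_mul_elemUnit {i j : Fin n} (hij : i ≠ j) (a b : R) :
    elemUnit i j hij a * elemUnit i j hij b = elemUnit i j hij (a + b) :=
  Units.ext (elemMat_mul_elemMat_same hij a b)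

lemma elemUnit_inv {i j : Fin n} (hij : i ≠ j) (a : R) :
    (elemUnit i j hij a)⁻¹ = elemUnit i j hij (-a) :=
  Units.ext rfl

lemma commute_elemUnit {i j k l : Fin n} (hkl : k ≠ l) (hij : i ≠ j) (hli : l ≠ i)
    (hjk : j ≠ k) (w z : R) : Commute (elemUnit k l hkl w) (elemUnit i j hij z) :=
  Units.ext <| by
    simp [elemUnit, elemMat, mul_add, add_mul, single_mul_single_of_ne, hli, hjk]
    abel

lemma elemUnit_conj_of_chain_left {i j k : Fin n} (hki : k ≠ i) (hij : i ≠ j) (hkj : k ≠ j)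
    (w z : R) :
    elemUnit k i hki w * elemUnit i j hij z * (elemUnit k i hki w)⁻¹ =
      elemUnit i j hij z * elemUnit k j hkj (w * z) :=
  mul_inv_eq_iff_eq_mul.2 <| Units.ext <| by
    simp [elemUnit, elemMat, mul_add, add_mul, single_mul_single_of_ne, hkj.symm,
      mul_assoc]
    abel

lemma elemUnit_conj_of_chain_right {i j l : Fin n} (hij : i ≠ j) (hjl : j ≠ l) (hil : i ≠ l)
    (w z : R) :
    elemUnit j l hjl w * elemUnit i j hij z * (elemUnit j l hjl w)⁻¹ =
      elemUnit i l hil (-(z * w)) * elemUnit i j hij z :=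
  mul_inv_eq_iff_eq_mul.2 <| Units.ext <| by
    simp [elemUnit, elemMat, mul_add, add_mul, single_mul_single_of_ne, hjl.symm, hil.symm,
      ← single_neg]
    abel

lemma elemUnit_mul_eq_commutator {i j p : Fin n} (hij : i ≠ j) (hip : i ≠ p) (hpj : p ≠ j)
    (a b : R) :
    elemUnit i j hij (a * b) = ⁅elemUnit i p hip a, elemUnit p j hpj b⁆ :=
  Units.ext <| by
    simp [commutatorElement_def, elemUnit, elemMat, mul_add, add_mul, single_mul_single_of_ne,
      hij.symm, hip.symm, hpj.symm, ← single_neg]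
    abel

end Elementary

section ElementarySubgroup

variable (n : ℕ) (R : Type*) [Ring R]

def elemSet (s : Set R) : Set (GL (Fin n) R) :=
  {g | ∃ i j, ∃ hij : i ≠ j, ∃ a ∈ s, g = elemUnit i j hij a}

/-- Generated by the `e_ij(a)` with `a ∈ s`; for an ideal `s` this is not the relative elementary
group, which is the normal closure in `E_n(R)`. -/
def elemSubgroup (s : Set R) : Subgroup (GL (Fin n) R) :=
  Subgroup.closure (elemSet n R s)

variable {n R}

lemma elemUnit_mem_elemSubgroup {s : Set R} {i j : Fin n} (hij : i ≠ j) {a : R} (ha : a ∈ s) :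
    elemUnit i j hij a ∈ elemSubgroup n R s :=
  Subgroup.subset_closure ⟨i, j, hij, a, ha, rfl⟩

lemma elemSubgroup_mono {s t : Set R} (hst : s ⊆ t) : elemSubgroup n R s ≤ elemSubgroup n R t :=
  Subgroup.closure_mono fun _ ⟨i, j, hij, a, ha, hg⟩ => ⟨i, j, hij, a, hst ha, hg⟩

lemma elementaryGroup_eq_elemSubgroup_univ : elementaryGroup n R = elemSubgroup n R Set.univ := by
  refine congrArg Subgroup.closure (Set.ext fun g => ⟨?_, ?_⟩)
  · rintro ⟨i, j, a, hij, hg⟩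
    exact ⟨i, j, hij, a, trivial, Units.ext hg⟩
  · rintro ⟨i, j, hij, a, -, rfl⟩
    exact ⟨i, j, a, hij, rfl⟩

lemma elemUnit_mem_elementaryGroup {i j : Fin n} (hij : i ≠ j) (a : R) :
    elemUnit i j hij a ∈ elementaryGroup n R := by
  rw [elementaryGroup_eq_elemSubgroup_univ]
  exact elemUnit_mem_elemSubgroup hij trivial

lemma inv_mem_elemSet {s : Set R} (hs : ∀ a ∈ s, -a ∈ s) {g : GL (Fin n) R}
    (hg : g ∈ elemSet n R s) : g⁻¹ ∈ elemSet n R s := by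
  obtain ⟨i, j, hij, a, ha, rfl⟩ := hg
  exact ⟨i, j, hij, -a, hs a ha, elemUnit_inv hij a⟩

end ElementarySubgroup

section Map

variable {n : ℕ} {R S : Type*} [CommRing R] [CommRing S] (f : R →+* S)

lemma Matrix.GeneralLinearGroup.map_elemUnit {i j : Fin n} (hij : i ≠ j) (a : R) :
    GeneralLinearGroup.map f (elemUnit i j hij a) = elemUnit i j hij (f a) :=
  Units.ext <| by simp [elemUnit, elemMat, Matrix.map_add, map_single]

lemma map_elementaryGroup :
    (elementaryGroup n R).map (GeneralLinearGroup.map f) = elemSubgroup n S (Set.range f) := by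
  rw [elementaryGroup_eq_elemSubgroup_univ, elemSubgroup, MonoidHom.map_closure]
  refine congrArg Subgroup.closure (Set.ext fun g => ⟨?_, ?_⟩)
  · rintro ⟨_, ⟨i, j, hij, a, -, rfl⟩, rfl⟩
    exact ⟨i, j, hij, f a, ⟨a, rfl⟩, GeneralLinearGroup.map_elemUnit f hij a⟩
  · rintro ⟨i, j, hij, _, ⟨a, rfl⟩, rfl⟩
    exact ⟨elemUnit i j hij a, ⟨i, j, hij, a, trivial, rfl⟩,
      GeneralLinearGroup.map_elemUnit f hij a⟩

lemma map_elementaryGroup_le :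
    (elementaryGroup n R).map (GeneralLinearGroup.map f) ≤ elementaryGroup n S := by
  rw [map_elementaryGroup, elementaryGroup_eq_elemSubgroup_univ]
  exact elemSubgroup_mono (Set.subset_univ _)

lemma elementaryGroup_le_map_sup_map {R' : Type*} [CommRing R'] (g : R' →+* S)
    (hfg : ∀ x, ∃ a y, x = f a + g y) :
    elementaryGroup n S ≤
      (elementaryGroup n R).map (GeneralLinearGroup.map f) ⊔
        (elementaryGroup n R').map (GeneralLinearGroup.map g) := by
  rw [elementaryGroup_eq_elemSubgroup_univ, elemSubgroup, Subgroup.closure_le]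
  rintro _ ⟨i, j, hij, x, -, rfl⟩
  obtain ⟨a, y, rfl⟩ := hfg x
  rw [← elemUnit_mul_elemUnit, ← GeneralLinearGroup.map_elemUnit,
    ← GeneralLinearGroup.map_elemUnit]
  exact Subgroup.mul_mem_sup (Subgroup.mem_map_of_mem _ (elemUnit_mem_elementaryGroup hij a))
    (Subgroup.mem_map_of_mem _ (elemUnit_mem_elementaryGroup hij y))

end Map

section GroupTheory

variable {G : Type*} [Group G] {H K : Subgroup G}

lemma Subgroup.mul_mem_mul_of_conj_mem {k x : G} (hk : k ∈ K)
    (hx : k * x * k⁻¹ ∈ (H : Set G) * K) : k * x ∈ (H : Set G) * K := by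
  obtain ⟨a, ha, b, hb, hab⟩ := Set.mem_mul.1 hx
  exact Set.mem_mul.2 ⟨a, ha, b * k, mul_mem hb hk, by rw [← mul_assoc, hab, inv_mul_cancel_right]⟩

lemma Subgroup.mul_subset_mul_of_conj_mem {s : Set G} (hH : Subgroup.closure s = H)
    (hs : ∀ x ∈ s, x⁻¹ ∈ s) (hconj : ∀ k ∈ K, ∀ x ∈ s, k * x * k⁻¹ ∈ (H : Set G) * K) :
    (K : Set G) * H ⊆ H * K := by
  rintro _ ⟨k, hk, x, hx, rfl⟩
  rw [SetLike.mem_coe, ← hH] at hx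
  induction hx using Subgroup.closure_induction'' generalizing k with
  | mem x hx => exact mul_mem_mul_of_conj_mem hk (hconj k hk x hx)
  | inv_mem x hx => exact mul_mem_mul_of_conj_mem hk (hconj k hk _ (hs x hx))
  | one => exact Set.mem_mul.2 ⟨1, H.one_mem, k, hk, by simp⟩
  | mul x y _ _ ihx ihy =>
    obtain ⟨a, ha, b, hb, hab⟩ := Set.mem_mul.1 (ihx k hk)
    obtain ⟨c, hc, d, hd, hcd⟩ := Set.mem_mul.1 (ihy b hb)
    exact Set.mem_mul.2
      ⟨a * c, mul_mem ha hc, d, hd, by rw [mul_assoc, hcd, ← mul_assoc, hab, mul_assoc]⟩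

lemma Subgroup.coe_sup_eq_mul_of_mul_subset (hKH : (K : Set G) * H ⊆ H * K) :
    ((H ⊔ K : Subgroup G) : Set G) = H * K := by
  refine le_antisymm (fun g hg => ?_) (Set.mul_subset_iff.2 fun a ha b hb =>
    mul_mem_sup ha hb)
  have hleft : ∀ x ∈ (H : Set G) ∪ K, ∀ y ∈ (H : Set G) * K, x * y ∈ (H : Set G) * K := by
    rintro x hx _ ⟨a, ha, b, hb, rfl⟩
    rcases hx with hx | hx
    · exact Set.mem_mul.2 ⟨x * a, mul_mem hx ha, b, hb, mul_assoc x a b⟩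
    · obtain ⟨c, hc, d, hd, hcd⟩ := Set.mem_mul.1 (hKH (Set.mul_mem_mul hx ha))
      exact Set.mem_mul.2 ⟨c, hc, d * b, mul_mem hd hb, by rw [← mul_assoc, hcd, mul_assoc]⟩
  rw [SetLike.mem_coe, sup_eq_closure] at hg
  induction hg using Subgroup.closure_induction_left with
  | one => exact Set.mem_mul.2 ⟨1, H.one_mem, 1, K.one_mem, one_mul 1⟩
  | mul_left x hx y _ hy => exact hleft x hx y hy
  | inv_mul_cancel x hx y _ hy => exact hleft x⁻¹ (hx.imp (H.inv_mem ·) (K.inv_mem ·)) y hy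

end GroupTheory

section Conjugation

variable {A : Type*} [CommRing A] (h : A)

def powMultiples (N : ℕ) : Set (Localization.Away h) :=
  Set.range fun a => algebraMap A (Localization.Away h) (h ^ N * a)

variable {h}

lemma powMultiples_antitone : Antitone (powMultiples h) := by
  rintro L N hLN _ ⟨a, rfl⟩
  refine ⟨h ^ (N - L) * a, ?_⟩
  dsimp only
  rw [← mul_assoc, ← pow_add, Nat.add_sub_cancel' hLN]

lemma powMultiples_subset_range (N : ℕ) :
    powMultiples h N ⊆ Set.range (algebraMap A (Localization.Away h)) :=
  Set.range_comp_subset_range _ _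

lemma neg_mem_powMultiples {N : ℕ} {z : Localization.Away h} (hz : z ∈ powMultiples h N) :
    -z ∈ powMultiples h N := by
  obtain ⟨a, rfl⟩ := hz
  exact ⟨-a, by simp⟩

lemma mul_mem_powMultiples {m L : ℕ} {w : Localization.Away h} {b : A}
    (hw : w * algebraMap A _ h ^ m = algebraMap A _ b) {z : Localization.Away h}
    (hz : z ∈ powMultiples h (L + m)) : w * z ∈ powMultiples h L := by
  obtain ⟨a, rfl⟩ := hz
  refine ⟨b * a, ?_⟩
  simp only [map_mul, map_pow, ← hw, pow_add]
  ring

lemma exists_mul_of_mem_powMultiples_add {M N : ℕ} {z : Localization.Away h}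
    (hz : z ∈ powMultiples h (M + N)) :
    ∃ x ∈ powMultiples h M, ∃ y ∈ powMultiples h N, z = x * y := by
  obtain ⟨a, rfl⟩ := hz
  refine ⟨_, ⟨a, rfl⟩, _, ⟨1, rfl⟩, ?_⟩
  rw [← map_mul, pow_add]
  ring_nf

variable {r : ℕ}

lemma conj_elemUnit_mem_of_not_transpose {m L : ℕ} {w : Localization.Away h} {b : A}
    (hw : w * algebraMap A _ h ^ m = algebraMap A _ b) {i j k l : Fin r} (hkl : k ≠ l)
    (hij : i ≠ j) (hne : ¬(l = i ∧ k = j)) {z : Localization.Away h}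
    (hz : z ∈ powMultiples h (L + m)) :
    elemUnit k l hkl w * elemUnit i j hij z * (elemUnit k l hkl w)⁻¹ ∈
      elemSubgroup r _ (powMultiples h L) := by
  have hzL : z ∈ powMultiples h L := powMultiples_antitone (Nat.le_add_right L m) hz
  by_cases hli : l = i
  · subst hli
    have hkj : k ≠ j := fun hkj => hne ⟨rfl, hkj⟩
    rw [elemUnit_conj_of_chain_left hkl hij hkj]
    exact mul_mem (elemUnit_mem_elemSubgroup hij hzL)
      (elemUnit_mem_elemSubgroup hkj (mul_mem_powMultiples hw hz))
  by_cases hkj : k = j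
  · subst hkj
    rw [elemUnit_conj_of_chain_right hij hkl (Ne.symm hli), mul_comm z w]
    exact mul_mem (elemUnit_mem_elemSubgroup _ (neg_mem_powMultiples (mul_mem_powMultiples hw hz)))
      (elemUnit_mem_elemSubgroup hij hzL)
  rw [(commute_elemUnit hkl hij hli (Ne.symm hkj) w z).eq, mul_inv_cancel_right]
  exact elemUnit_mem_elemSubgroup hij hzL

lemma conj_elemUnit_mem (hr : 3 ≤ r) {m L : ℕ} {w : Localization.Away h} {b : A}
    (hw : w * algebraMap A _ h ^ m = algebraMap A _ b) {i j k l : Fin r} (hkl : k ≠ l)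
    (hij : i ≠ j) {z : Localization.Away h} (hz : z ∈ powMultiples h (L + m + (L + m))) :
    elemUnit k l hkl w * elemUnit i j hij z * (elemUnit k l hkl w)⁻¹ ∈
      elemSubgroup r _ (powMultiples h L) := by
  by_cases htr : l = i ∧ k = j
  swap
  · exact conj_elemUnit_mem_of_not_transpose hw hkl hij htr
      (powMultiples_antitone (Nat.le_add_right _ _) hz)
  obtain ⟨rfl, rfl⟩ := htr
  -- `e_ij(x y) = ⁅e_ip(x), e_pj(y)⁆`, and both factors fall under the non-transposed case
  obtain ⟨p, hpi, hpj⟩ := Fin.exists_ne_and_ne_of_two_lt l k hr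
  obtain ⟨x, hx, y, hy, rfl⟩ := exists_mul_of_mem_powMultiples_add hz
  rw [elemUnit_mul_eq_commutator hij (Ne.symm hpi) hpj, ← MulAut.conj_apply,
    map_commutatorElement, MulAut.conj_apply, MulAut.conj_apply, commutatorElement_def]
  have hxE := conj_elemUnit_mem_of_not_transpose hw hkl (Ne.symm hpi) (fun h => hpj h.2.symm) hx
  have hyE := conj_elemUnit_mem_of_not_transpose hw hkl hpj (fun h => hpi h.1.symm) hy
  exact mul_mem (mul_mem (mul_mem hxE hyE) (inv_mem hxE)) (inv_mem hyE)

lemma exists_conj_elemUnit_mem (hr : 3 ≤ r) {k l : Fin r} (hkl : k ≠ l) (w : Localization.Away h)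
    (L : ℕ) :
    ∃ N, ∀ g ∈ elemSubgroup r _ (powMultiples h N),
      elemUnit k l hkl w * g * (elemUnit k l hkl w)⁻¹ ∈ elemSubgroup r _ (powMultiples h L) := by
  obtain ⟨m, b, hw⟩ := IsLocalization.Away.surj h w
  refine ⟨L + m + (L + m), fun g hg => ?_⟩
  have hle : elemSubgroup r _ (powMultiples h (L + m + (L + m))) ≤
      (elemSubgroup r _ (powMultiples h L)).comap (MulAut.conj (elemUnit k l hkl w)).toMonoidHom :=
    (Subgroup.closure_le _).2 fun _ ⟨i, j, hij, z, hz, hg⟩ =>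
      hg ▸ conj_elemUnit_mem hr hw hkl hij hz
  exact hle hg

theorem exists_conj_mem_elemSubgroup_powMultiples (hr : 3 ≤ r)
    {β : GL (Fin r) (Localization.Away h)}
    (hβ : β ∈ elementaryGroup r (Localization.Away h)) (L : ℕ) :
    ∃ N, ∀ g ∈ elemSubgroup r _ (powMultiples h N),
      β * g * β⁻¹ ∈ elemSubgroup r _ (powMultiples h L) := by
  rw [elementaryGroup_eq_elemSubgroup_univ] at hβ
  induction hβ using Subgroup.closure_induction_left generalizing L with
  | one => exact ⟨L, fun g hg => by simpa using hg⟩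
  | mul_left x hx y _ ih =>
    obtain ⟨k, l, hkl, w, -, rfl⟩ := hx
    obtain ⟨M, hM⟩ := exists_conj_elemUnit_mem hr hkl w L
    obtain ⟨N, hN⟩ := ih M
    exact ⟨N, fun g hg => by simpa only [_root_.mul_inv_rev, mul_assoc] using hM _ (hN g hg)⟩
  | inv_mul_cancel x hx y _ ih =>
    obtain ⟨k, l, hkl, w, -, rfl⟩ := hx
    obtain ⟨M, hM⟩ := exists_conj_elemUnit_mem hr hkl (-w) L
    obtain ⟨N, hN⟩ := ih M
    refine ⟨N, fun g hg => ?_⟩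
    simpa only [elemUnit_inv, _root_.mul_inv_rev, mul_assoc] using hM _ (hN g hg)

end Conjugation

section Patching

variable {A : Type*} [CommRing A] {h : A}

lemma conj_elemUnit_algebraMap_mem_mul {r : ℕ} (hr : 3 ≤ r) {B : Set A}
    (hsum : ∀ (N : ℕ) (a : A), ∃ c, ∃ b ∈ B, a = c * h ^ N + b)
    {K : Subgroup (GL (Fin r) (Localization.Away h))}
    (hK : K ≤ elementaryGroup r (Localization.Away h))
    (hBK : ∀ (i j : Fin r) (hij : i ≠ j), ∀ b ∈ B, elemUnit i j hij (algebraMap A _ b) ∈ K)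
    {k : GL (Fin r) (Localization.Away h)} (hk : k ∈ K) {i j : Fin r} (hij : i ≠ j) (a : A) :
    k * elemUnit i j hij (algebraMap A _ a) * k⁻¹ ∈
      (elemSubgroup r (Localization.Away h) (Set.range (algebraMap A _)) :
        Set (GL (Fin r) (Localization.Away h))) * K := by
  obtain ⟨N, hN⟩ := exists_conj_mem_elemSubgroup_powMultiples hr (hK hk) 0
  obtain ⟨c, b, hb, rfl⟩ := hsum N a
  have hsplit : elemUnit i j hij (algebraMap A (Localization.Away h) (c * h ^ N + b)) =
      elemUnit i j hij (algebraMap A _ (h ^ N * c)) * elemUnit i j hij (algebraMap A _ b) := by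
    rw [elemUnit_mul_elemUnit, ← map_add, mul_comm]
  rw [hsplit, ← MulAut.conj_apply, map_mul, MulAut.conj_apply, MulAut.conj_apply]
  refine Set.mul_mem_mul ?_ (mul_mem (mul_mem hk (hBK i j hij b hb)) (inv_mem hk))
  exact elemSubgroup_mono (powMultiples_subset_range 0)
    (hN _ (elemUnit_mem_elemSubgroup hij ⟨c, rfl⟩))

lemma coe_mul_elemSubgroup_range_subset {r : ℕ} (hr : 3 ≤ r) {B : Set A}
    (hsum : ∀ (N : ℕ) (a : A), ∃ c, ∃ b ∈ B, a = c * h ^ N + b)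
    {K : Subgroup (GL (Fin r) (Localization.Away h))}
    (hK : K ≤ elementaryGroup r (Localization.Away h))
    (hBK : ∀ (i j : Fin r) (hij : i ≠ j), ∀ b ∈ B, elemUnit i j hij (algebraMap A _ b) ∈ K) :
    (K : Set (GL (Fin r) (Localization.Away h))) *
        elemSubgroup r (Localization.Away h) (Set.range (algebraMap A _)) ⊆
      elemSubgroup r (Localization.Away h) (Set.range (algebraMap A _)) * K :=
  Subgroup.mul_subset_mul_of_conj_mem rfl
    (fun _ => inv_mem_elemSet (by rintro _ ⟨a, rfl⟩; exact ⟨-a, map_neg _ a⟩))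
    (by
      rintro k hk _ ⟨i, j, hij, _, ⟨a, rfl⟩, rfl⟩
      exact conj_elemUnit_algebraMap_mem_mul hr hsum hK hBK hk hij a)

variable {B : Subring A}

lemma locSubringMap_algebraMap (hB : h ∈ B) (b : B) :
    locSubringMap A B h hB (algebraMap B _ b) = algebraMap A _ b := by
  simp [locSubringMap, Localization.awayLift, IsLocalization.Away.lift_eq]

lemma exists_eq_mul_pow_add_of_forall_eq_mul_add (hB : h ∈ B)
    (hsum : ∀ a : A, ∃ c : A, ∃ b ∈ B, a = c * h + b) (N : ℕ) (a : A) :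
    ∃ c : A, ∃ b ∈ B, a = c * h ^ N + b := by
  induction N with
  | zero => exact ⟨a, 0, B.zero_mem, by simp⟩
  | succ N ih =>
    obtain ⟨c, b, hb, rfl⟩ := ih
    obtain ⟨c', b', hb', rfl⟩ := hsum c
    exact ⟨c', b' * h ^ N + b, B.add_mem (B.mul_mem hb' (B.pow_mem hB N)) hb, by ring⟩

lemma exists_eq_algebraMap_add_locSubringMap (hB : h ∈ B)
    (hsum : ∀ a : A, ∃ c : A, ∃ b ∈ B, a = c * h + b) (x : Localization.Away h) :
    ∃ a y, x = algebraMap A _ a + locSubringMap A B h hB y := by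
  obtain ⟨n, a₀, hx⟩ := IsLocalization.Away.surj h x
  obtain ⟨c, b, hb, rfl⟩ := exists_eq_mul_pow_add_of_forall_eq_mul_add hB hsum n a₀
  refine ⟨c, algebraMap B _ ⟨b, hb⟩ * IsLocalization.Away.invSelf (⟨h, hB⟩ : B) ^ n, ?_⟩
  have hinv : (algebraMap A (Localization.Away h) h *
      locSubringMap A B h hB (IsLocalization.Away.invSelf (⟨h, hB⟩ : B))) ^ n = 1 := by
    rw [← locSubringMap_algebraMap hB ⟨h, hB⟩, ← map_mul, IsLocalization.Away.mul_invSelf,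
      map_one, one_pow]
  apply ((IsLocalization.Away.algebraMap_isUnit h).pow n).mul_right_cancel
  rw [hx, map_mul, map_pow, locSubringMap_algebraMap, map_add, map_mul, map_pow]
  linear_combination (-algebraMap A (Localization.Away h) b) * hinv

end Patching

theorem elementary_factorization_of_patching_general
    (A : Type*) [CommRing A] (B : Subring A) (h : A) (hB : h ∈ B)
    (hsum : ∀ a : A, ∃ c : A, ∃ b ∈ B, a = c * h + b)
    (r : ℕ) (hr : 3 ≤ r) :
    ∀ α ∈ elementaryGroup r (Localization.Away h),
      ∃ γ ∈ elementaryGroup r A,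
        ∃ β ∈ elementaryGroup r (Localization.Away (⟨h, hB⟩ : B)),
          α = Units.map ((algebraMap A (Localization.Away h)).mapMatrix).toMonoidHom γ *
              Units.map ((locSubringMap A B h hB).mapMatrix).toMonoidHom β := by
  intro α hα
  set φ := algebraMap A (Localization.Away h)
  set ψ := locSubringMap A B h hB
  set H := (elementaryGroup r A).map (GeneralLinearGroup.map φ)
  set K := (elementaryGroup r (Localization.Away (⟨h, hB⟩ : B))).map (GeneralLinearGroup.map ψ)
  have hKH : (K : Set (GL (Fin r) (Localization.Away h))) * H ⊆ H * K := by
    rw [show H = elemSubgroup r _ (Set.range φ) from map_elementaryGroup φ]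
    refine coe_mul_elemSubgroup_range_subset hr
      (exists_eq_mul_pow_add_of_forall_eq_mul_add hB hsum) (map_elementaryGroup_le ψ) ?_
    intro i j hij b hb
    rw [← locSubringMap_algebraMap hB ⟨b, hb⟩, ← GeneralLinearGroup.map_elemUnit]
    exact Subgroup.mem_map_of_mem _ (elemUnit_mem_elementaryGroup hij _)
  have hαHK : α ∈ ((H ⊔ K : Subgroup _) : Set (GL (Fin r) (Localization.Away h))) :=
    elementaryGroup_le_map_sup_map φ ψ (exists_eq_algebraMap_add_locSubringMap hB hsum) hα
  rw [Subgroup.coe_sup_eq_mul_of_mul_subset hKH] at hαHK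
  obtain ⟨_, ⟨γ, hγ, rfl⟩, _, ⟨β, hβ, rfl⟩, rfl⟩ := hαHK
  exact ⟨γ, hγ, β, hβ, rfl⟩

/-- **Vorst–Lindel.** If `B ⊆ A` is a subring, `h ∈ B` non-nilpotent with
`Ah + B = A`, then every `α ∈ E_r(A_h)` factors as `α = γ_h · β` with `γ ∈ E_r(A)`
and `β ∈ E_r(B_h)`. -/
theorem elementary_factorization_of_patching
    (A : Type*) [CommRing A] (B : Subring A) (h : A) (hB : h ∈ B)
    (hh : ¬ IsNilpotent h)
    (hsum : ∀ a : A, ∃ c : A, ∃ b ∈ B, a = c * h + b)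
    (r : ℕ) (hr : 3 ≤ r) :
    ∀ α ∈ elementaryGroup r (Localization.Away h),
      ∃ γ ∈ elementaryGroup r A,
        ∃ β ∈ elementaryGroup r (Localization.Away (⟨h, hB⟩ : B)),
          α = Units.map ((algebraMap A (Localization.Away h)).mapMatrix).toMonoidHom γ *
              Units.map ((locSubringMap A B h hB).mapMatrix).toMonoidHom β :=
  elementary_factorization_of_patching_general A B h hB hsum r hr
end
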